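/- arXiv:2404.11578 — 3 statements merged into one kernel-verified Lean document; each statement's English description precedes it below -/
import Mathlib

section
/- Let Π be a nonempty set, let R : Π → ℝ and V : Π → ℝ, let R_min ≤ R_max be real numbers, let 0 < γ < 1, and let ε > 0. Assume: (i) R_min/(1-γ) ≤ R(π) ≤ R_max/(1-γ) for every π ∈ Π; (ii) V attains a maximum value V_max on Π; (iii) gap assumption: for every π ∈ Π with V(π) ≠ V_max one has V(π) < V_max − ε. Then for any λ > (R_max − R_min)/(ε(1−γ)), every π* ∈ Π maximizing the dual objective R(π) + λ V(π) over Π satisfies both V(π*) = V_max and R(π*) ≥ R(π̃) for every π̃ ∈ Π with V(π̃) = V_max. (Theorem 3.1: exactness of the Lagrangian relaxation of LTL-constrained policy optimization.) -/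
/-- Theorem 3.1: exactness of the Lagrangian relaxation of LTL-constrained
policy optimization. -/
theorem stmt_0 {Pol : Type*} [Nonempty Pol] (R V : Pol → ℝ)
    (Rmin Rmax : ℝ) (hRm : Rmin ≤ Rmax)
    (γ : ℝ) (hγ0 : 0 < γ) (hγ1 : γ < 1)
    (ε : ℝ) (hε : 0 < ε)
    (hRbound : ∀ π : Pol, Rmin / (1 - γ) ≤ R π ∧ R π ≤ Rmax / (1 - γ))
    (Vmax : ℝ) (hVub : ∀ π : Pol, V π ≤ Vmax) (hVatt : ∃ π : Pol, V π = Vmax)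
    (hgap : ∀ π : Pol, V π ≠ Vmax → V π < Vmax - ε)
    (lam : ℝ) (hlam : lam > (Rmax - Rmin) / (ε * (1 - γ)))
    (πstar : Pol) (hopt : ∀ π : Pol, R π + lam * V π ≤ R πstar + lam * V πstar) :
    V πstar = Vmax ∧ ∀ πt : Pol, V πt = Vmax → R πt ≤ R πstar := by
  have h1γ : (0:ℝ) < 1 - γ := by linarith
  have hεγ : (0:ℝ) < ε * (1 - γ) := mul_pos hε h1γ
  have hlam' : (Rmax - Rmin) / (1 - γ) < lam * ε := by
    rw [div_lt_iff₀ h1γ]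
    have := (div_lt_iff₀ hεγ).mp hlam
    nlinarith
  have hVstar : V πstar = Vmax := by
    by_contra h
    obtain ⟨π0, hπ0⟩ := hVatt
    have hgapstar := hgap πstar h
    have h0 := hopt π0
    have hb1 := (hRbound π0).1
    have hb2 := (hRbound πstar).2
    -- lam * (Vmax - V πstar) ≤ R πstar - R π0 ≤ (Rmax - Rmin)/(1-γ)
    have hlampos : 0 < lam := lt_of_le_of_lt (div_nonneg (by linarith) hεγ.le) hlam
    have : lam * ε < lam * (Vmax - V πstar) := by nlinarith
    have hRdiff : R πstar - R π0 ≤ (Rmax - Rmin) / (1 - γ) := by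
      have : Rmax / (1 - γ) - Rmin / (1 - γ) = (Rmax - Rmin) / (1 - γ) := by ring
      linarith
    rw [hπ0] at h0
    nlinarith
  refine ⟨hVstar, fun πt hπt => ?_⟩
  have := hopt πt
  rw [hπt, hVstar] at this
  linarith
end

section
/- Let Π be a nonempty set, let R : Π → ℝ and V : Π → ℝ, let R_min ≤ R_max be real numbers, let 0 < γ < 1, and let ε > 0. Assume: (i) R_min/(1−γ) ≤ R(π) ≤ R_max/(1−γ) for every π ∈ Π; (ii) V attains a maximum value V_max on Π; (iii) for every π ∈ Π with V(π) ≠ V_max one has V(π) < V_max − ε. Then for any λ > (R_max − R_min)/(ε(1−γ)), every maximizer π* of the dual objective R + λV over Π satisfies V(π*) = V_max, i.e., π* is constraint-optimal. (Intermediate conclusion in the proof of Theorem 3.1.) -/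
/-- Intermediate conclusion in the proof of Theorem 3.1: every maximizer of
the dual objective is constraint-optimal. -/
theorem stmt_2 {Pol : Type*} [Nonempty Pol] (R V : Pol → ℝ)
    (Rmin Rmax : ℝ) (hRm : Rmin ≤ Rmax)
    (γ : ℝ) (hγ0 : 0 < γ) (hγ1 : γ < 1)
    (ε : ℝ) (hε : 0 < ε)
    (hRbound : ∀ π : Pol, Rmin / (1 - γ) ≤ R π ∧ R π ≤ Rmax / (1 - γ))
    (Vmax : ℝ) (hVub : ∀ π : Pol, V π ≤ Vmax) (hVatt : ∃ π : Pol, V π = Vmax)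
    (hgap : ∀ π : Pol, V π ≠ Vmax → V π < Vmax - ε)
    (lam : ℝ) (hlam : lam > (Rmax - Rmin) / (ε * (1 - γ)))
    (πstar : Pol) (hopt : ∀ π : Pol, R π + lam * V π ≤ R πstar + lam * V πstar) :
    V πstar = Vmax := by
  by_contra hne
  obtain ⟨π0, hπ0⟩ := hVatt
  have hgapπ := hgap πstar hne
  have h1γ : (0:ℝ) < 1 - γ := by linarith
  have hεγ : (0:ℝ) < ε * (1 - γ) := by positivity
  have hlam' : lam * (ε * (1 - γ)) > Rmax - Rmin := by
    have := (div_lt_iff₀ hεγ).mp hlam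
    linarith
  have hR0 := hRbound π0
  have hRs := hRbound πstar
  have hopt0 := hopt π0
  rw [hπ0] at hopt0
  have hlampos : 0 < lam := lt_of_le_of_lt (div_nonneg (by linarith) hεγ.le) hlam
  have hRdiff : R πstar - R π0 ≤ (Rmax - Rmin) / (1 - γ) := by
    have := hR0.1; have := hRs.2
    rw [sub_div]; linarith
  have hkey : lam * (Vmax - V πstar) ≤ (Rmax - Rmin) / (1 - γ) := by
    nlinarith
  have h2 : lam * ε < lam * (Vmax - V πstar) := by
    apply mul_lt_mul_of_pos_left _ hlampos
    linarith
  have h3 : (Rmax - Rmin) / (1 - γ) < lam * ε := by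
    rw [div_lt_iff₀ h1γ]; nlinarith
  linarith
end

section
/- Let M be a natural number, let 0 < ε < 1, let γ be a real number with (1−ε)^(1/(M+1)) ≤ γ < 1, let p ∈ [0, 1], and let V be a real number satisfying p/(1−γ) ≤ V ≤ p·(1/(1−γ)) + (1−p)·(1 − γ^(M+1))/(1−γ). Then |(1−γ)·V − p| ≤ ε. (Lemma C.1: (1−γ) times the CyclER value of a policy is within ε of its LTL satisfaction probability.) -/
/-- Lemma C.1: (1−γ) times the CyclER value of a policy is within ε of its
LTL satisfaction probability. -/
theorem stmt_5 (M : ℕ) (ε : ℝ) (hε0 : 0 < ε) (hε1 : ε < 1)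
    (γ : ℝ) (hγlb : (1 - ε) ^ ((1 : ℝ) / (M + 1)) ≤ γ) (hγub : γ < 1)
    (p : ℝ) (hp0 : 0 ≤ p) (hp1 : p ≤ 1)
    (V : ℝ)
    (hlb : p / (1 - γ) ≤ V)
    (hub : V ≤ p * (1 / (1 - γ)) + (1 - p) * ((1 - γ ^ (M + 1)) / (1 - γ))) :
    |(1 - γ) * V - p| ≤ ε := by
  have h1γ : (0:ℝ) < 1 - γ := by linarith
  have hγ0 : 0 ≤ γ := le_trans (Real.rpow_nonneg (by linarith) _) hγlb
  have hpow : 1 - ε ≤ γ ^ (M + 1) := by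
    have hM : ((M:ℝ) + 1) ≠ 0 := by positivity
    have h1 : ((1 - ε) ^ ((1:ℝ) / (M + 1))) ^ (M + 1) ≤ γ ^ (M + 1) :=
      pow_le_pow_left₀ (Real.rpow_nonneg (by linarith) _) hγlb _
    have h2 : ((1 - ε) ^ ((1:ℝ) / (M + 1))) ^ (M + 1) = 1 - ε := by
      rw [← Real.rpow_natCast ((1 - ε) ^ ((1:ℝ) / (M + 1))) (M + 1),
        ← Real.rpow_mul (by linarith)]
      push_cast
      rw [one_div, inv_mul_cancel₀ hM, Real.rpow_one]
    linarith [h1, h2.symm.le]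
  have hγpow1 : γ ^ (M + 1) ≤ 1 := pow_le_one₀ hγ0 hγub.le
  -- lower bound
  have hlow : p ≤ (1 - γ) * V := by
    have := (div_le_iff₀ h1γ).mp hlb
    linarith [mul_comm V (1 - γ)]
  -- upper bound
  have hup : (1 - γ) * V ≤ p + (1 - p) * (1 - γ ^ (M + 1)) := by
    have h := mul_le_mul_of_nonneg_left hub h1γ.le
    have e1 : (1 - γ) * (p * (1 / (1 - γ))) = p := by field_simp
    have e2 : (1 - γ) * ((1 - p) * ((1 - γ ^ (M + 1)) / (1 - γ)))
        = (1 - p) * (1 - γ ^ (M + 1)) := by field_simp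
    calc (1 - γ) * V ≤ (1 - γ) * (p * (1 / (1 - γ)) + (1 - p) * ((1 - γ ^ (M + 1)) / (1 - γ))) := h
      _ = p + (1 - p) * (1 - γ ^ (M + 1)) := by rw [mul_add, e1, e2]
  have hslack : (1 - p) * (1 - γ ^ (M + 1)) ≤ ε := by
    have : (1 - p) * (1 - γ ^ (M + 1)) ≤ 1 * (1 - γ ^ (M + 1)) :=
      mul_le_mul_of_nonneg_right (by linarith) (by linarith)
    nlinarith
  rw [abs_le]
  constructor <;> linarith
end
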